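/- Let θ > 0 and δ ∈ (0,1). There exists a constant C > 0, depending only on θ and δ, such that for all t ≥ 0: ∫₀^t e^{−2θ(t−s)} e^{−θ⟨s⟩^{1−δ}} ds ≤ C e^{−θ⟨t⟩^{1−δ}}, where ⟨u⟩ = (1+u²)^{1/2}. -/

import Mathlib

/-!
Write `p = 1 - δ ∈ [0, 1]`. Since `⟨·⟩` is 1-Lipschitz and `x ↦ x ^ p` is subadditive on `[0, ∞)`,
`⟨t⟩ ^ p ≤ ⟨s⟩ ^ p + (t - s) ^ p ≤ ⟨s⟩ ^ p + 1 + (t - s)` for `s ≤ t`. Hence the integrand is at most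
`e^θ e^{-θ⟨t⟩^p} e^{-θ(t-s)}`: half of the kernel's decay pays for the loss in the weight, and the
remaining `∫₀^t e^{-θ(t-s)} ds ≤ 1/θ` gives the constant `C = e^θ / θ`.
-/

noncomputable section

/-- Japanese bracket of a scalar: `⟨u⟩ = (1+u²)^{1/2}`. -/
def jap (u : ℝ) : ℝ := Real.sqrt (1 + u ^ 2)

open Real

lemma one_le_jap (u : ℝ) : 1 ≤ jap u :=
  Real.one_le_sqrt.2 (le_add_of_nonneg_right (sq_nonneg u))

lemma abs_le_jap (u : ℝ) : |u| ≤ jap u :=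
  Real.abs_le_sqrt (le_add_of_nonneg_left zero_le_one)

lemma jap_sq (u : ℝ) : jap u ^ 2 = 1 + u ^ 2 :=
  Real.sq_sqrt (by positivity)

@[fun_prop]
lemma continuous_jap : Continuous jap := by
  unfold jap; fun_prop

lemma jap_le_jap_add_abs_sub (s t : ℝ) : jap t ≤ jap s + |t - s| := by
  have hs := abs_le_jap s
  have hjs := one_le_jap s
  refine Real.sqrt_le_iff.2 ⟨by positivity, ?_⟩
  have hts : t ^ 2 ≤ s ^ 2 + 2 * |s| * |t - s| + |t - s| ^ 2 := by
    rw [sq_abs, mul_assoc, ← abs_mul]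
    nlinarith [le_abs_self (s * (t - s))]
  nlinarith [jap_sq s, abs_nonneg (t - s)]

lemma rpow_le_one_add {x p : ℝ} (hx : 0 ≤ x) (hp0 : 0 ≤ p) (hp1 : p ≤ 1) : x ^ p ≤ 1 + x := by
  rcases le_total x 1 with h | h
  · linarith [Real.rpow_le_one hx h hp0]
  · linarith [Real.rpow_le_self_of_one_le h hp1]

lemma jap_rpow_le_jap_rpow_add {p : ℝ} (hp0 : 0 ≤ p) (hp1 : p ≤ 1) (s t : ℝ) :
    jap t ^ p ≤ jap s ^ p + (1 + |t - s|) :=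
  calc jap t ^ p ≤ (jap s + |t - s|) ^ p :=
        Real.rpow_le_rpow (by linarith [one_le_jap t]) (jap_le_jap_add_abs_sub s t) hp0
    _ ≤ jap s ^ p + |t - s| ^ p :=
        Real.rpow_add_le_add_rpow (by linarith [one_le_jap s]) (abs_nonneg _) hp0 hp1
    _ ≤ jap s ^ p + (1 + |t - s|) := by gcongr; exact rpow_le_one_add (abs_nonneg _) hp0 hp1

lemma exp_mul_exp_jap_rpow_le {θ p s t : ℝ} (hθ : 0 ≤ θ) (hp0 : 0 ≤ p) (hp1 : p ≤ 1)
    (hst : s ≤ t) :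
    exp (-2 * θ * (t - s)) * exp (-θ * jap s ^ p) ≤
      exp θ * exp (-θ * jap t ^ p) * exp (-θ * (t - s)) := by
  have hweight := mul_le_mul_of_nonneg_left (jap_rpow_le_jap_rpow_add hp0 hp1 s t) hθ
  rw [abs_of_nonneg (sub_nonneg.2 hst)] at hweight
  have hkernel : 0 ≤ θ * (t - s) := mul_nonneg hθ (sub_nonneg.2 hst)
  simp only [← exp_add]
  exact exp_le_exp.2 (by linarith)

lemma integral_exp_neg_mul_sub {θ : ℝ} (hθ : θ ≠ 0) (t : ℝ) :
    ∫ s in (0:ℝ)..t, exp (-θ * (t - s)) = (1 - exp (-θ * t)) / θ := by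
  rw [intervalIntegral.integral_comp_sub_left (fun u => exp (-θ * u)),
    intervalIntegral.integral_comp_mul_left (fun u => exp u) (neg_ne_zero.2 hθ), integral_exp]
  simp only [sub_self, sub_zero, mul_zero, exp_zero, smul_eq_mul]
  field_simp
  ring

lemma integral_exp_neg_mul_sub_le {θ : ℝ} (hθ : 0 < θ) (t : ℝ) :
    ∫ s in (0:ℝ)..t, exp (-θ * (t - s)) ≤ θ⁻¹ := by
  rw [integral_exp_neg_mul_sub hθ.ne', div_eq_mul_inv]
  exact mul_le_of_le_one_left (inv_nonneg.2 hθ.le) (sub_le_self _ (exp_pos _).le)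

/-- the convolution estimate
`∫₀^t e^{-2θ(t-s)} e^{-θ⟨s⟩^{1-δ}} ds ≤ C e^{-θ⟨t⟩^{1-δ}}`. -/
theorem exp_convolution_bound (θ δ : ℝ) (hθ : 0 < θ) (hδ0 : 0 < δ) (hδ1 : δ < 1) :
    ∃ C > (0:ℝ), ∀ t : ℝ, 0 ≤ t →
      (∫ s in (0:ℝ)..t,
        Real.exp (-2 * θ * (t - s)) * Real.exp (-θ * jap s ^ (1 - δ))) ≤
      C * Real.exp (-θ * jap t ^ (1 - δ)) := by
  have hp0 : 0 ≤ 1 - δ := by linarith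
  have hp1 : 1 - δ ≤ 1 := by linarith
  refine ⟨exp θ / θ, by positivity, fun t ht => ?_⟩
  calc (∫ s in (0:ℝ)..t, exp (-2 * θ * (t - s)) * exp (-θ * jap s ^ (1 - δ)))
      ≤ ∫ s in (0:ℝ)..t, exp θ * exp (-θ * jap t ^ (1 - δ)) * exp (-θ * (t - s)) :=
        intervalIntegral.integral_mono_on ht
          ((by fun_prop : Continuous _).intervalIntegrable _ _)
          ((by fun_prop : Continuous _).intervalIntegrable _ _)
          fun s hs => exp_mul_exp_jap_rpow_le hθ.le hp0 hp1 hs.2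
    _ = exp θ * exp (-θ * jap t ^ (1 - δ)) * ∫ s in (0:ℝ)..t, exp (-θ * (t - s)) :=
        intervalIntegral.integral_const_mul _ _
    _ ≤ exp θ * exp (-θ * jap t ^ (1 - δ)) * θ⁻¹ := by
        gcongr; exact integral_exp_neg_mul_sub_le hθ t
    _ = exp θ / θ * exp (-θ * jap t ^ (1 - δ)) := by ring
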